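/- With the notation of the context, for every particle array v ∈ Z^{T·M} and every index path k ∈ {1,…,M}^T one has r_{k,v}(θ,ϑ) = r_{𝟏, s_{1,k}(v)}(θ,ϑ), i.e. the averaged acceptance ratio started from the path v^{(k)} equals the averaged acceptance ratio started from the first path of the array obtained by swapping v^{(𝟏)} and v^{(k)}. -/

import Mathlib

open MeasureTheory Finset

namespace MHAARRB7

variable {Z : Type*}

/-- The path `v^{(k)}` extracted from the particle array `v`. -/
def pathOf (n m : ℕ) (v : Fin (n + 1) → Fin (m + 1) → Z)
    (k : Fin (n + 1) → Fin (m + 1)) : Fin (n + 1) → Z := fun t => v t (k t)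

/-- The constant index path `𝟏`. -/
def onePath (n m : ℕ) : Fin (n + 1) → Fin (m + 1) := fun _ => 0

/-- The swap operator `s_{1,k}`. -/
def swapArr (n m : ℕ) (k : Fin (n + 1) → Fin (m + 1))
    (v : Fin (n + 1) → Fin (m + 1) → Z) : Fin (n + 1) → Fin (m + 1) → Z :=
  fun t i => v t (Equiv.swap 0 (k t) i)

/-- The selection probabilities `b_{θ,ϑ}(k|v)`. -/
noncomputable def bSel (n m : ℕ) (γ qp : Fin (n + 1) → Z → ℝ)
    (k : Fin (n + 1) → Fin (m + 1)) (v : Fin (n + 1) → Fin (m + 1) → Z) : ℝ :=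
  ∏ t, (γ t (v t (k t)) / qp t (v t (k t))) / (∑ j, γ t (v t j) / qp t (v t j))

/-- The acceptance ratio `r_{z,z'}(θ,ϑ)`. -/
noncomputable def accRatio (n : ℕ) (ηθ ηϑ qθϑ qϑθ : ℝ)
    (γθ γϑ γθϑ : Fin (n + 1) → Z → ℝ) (z z' : Fin (n + 1) → Z) : ℝ :=
  qϑθ * ηϑ / (qθϑ * ηθ) *
    ∏ t, (γθϑ t (z t) / γθ t (z t)) * (γϑ t (z' t) / γθϑ t (z' t))

/-- The averaged ratio `r_{l,v}(θ,ϑ)`. -/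
noncomputable def rBar (n m : ℕ) (ηθ ηϑ qθϑ qϑθ : ℝ)
    (γθ γϑ γθϑ qp : Fin (n + 1) → Z → ℝ)
    (l : Fin (n + 1) → Fin (m + 1)) (v : Fin (n + 1) → Fin (m + 1) → Z) : ℝ :=
  ∑ k : Fin (n + 1) → Fin (m + 1),
    bSel n m γθϑ qp k v *
      accRatio n ηθ ηϑ qθϑ qϑθ γθ γϑ γθϑ (pathOf n m v l) (pathOf n m v k)

/-!
Relabelling the particles at each time `t` by a permutation `σ t` turns the selection
probability of a path `k` into that of `σ ∘ k` (the normalising sums over particles are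
permutation invariant), so summing over all paths gives `r_{l, σ v} = r_{σ l, v}`.
For `σ t` the transposition of the first particle (index `0`) and `k t`, `σ 𝟏 = k`.
-/

def permArr (n m : ℕ) (σ : Fin (n + 1) → Equiv.Perm (Fin (m + 1)))
    (v : Fin (n + 1) → Fin (m + 1) → Z) : Fin (n + 1) → Fin (m + 1) → Z :=
  fun t i => v t (σ t i)

section Relabel

variable (n m : ℕ) (σ : Fin (n + 1) → Equiv.Perm (Fin (m + 1)))
  (v : Fin (n + 1) → Fin (m + 1) → Z) (l : Fin (n + 1) → Fin (m + 1))

theorem pathOf_permArr :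
    pathOf n m (permArr n m σ v) l = pathOf n m v (Equiv.piCongrRight σ l) :=
  rfl

theorem bSel_permArr (γ qp : Fin (n + 1) → Z → ℝ) :
    bSel n m γ qp l (permArr n m σ v) = bSel n m γ qp (Equiv.piCongrRight σ l) v :=
  Finset.prod_congr rfl fun t _ =>
    congrArg (_ / ·) (Equiv.sum_comp (σ t) fun j => γ t (v t j) / qp t (v t j))

theorem rBar_permArr (ηθ ηϑ qθϑ qϑθ : ℝ) (γθ γϑ γθϑ qp : Fin (n + 1) → Z → ℝ) :
    rBar n m ηθ ηϑ qθϑ qϑθ γθ γϑ γθϑ qp l (permArr n m σ v)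
      = rBar n m ηθ ηϑ qθϑ qϑθ γθ γϑ γθϑ qp (Equiv.piCongrRight σ l) v := by
  refine Fintype.sum_equiv (Equiv.piCongrRight σ) _ _ fun k => ?_
  rw [bSel_permArr, pathOf_permArr, pathOf_permArr]

end Relabel

theorem swapArr_eq_permArr (n m : ℕ) (k : Fin (n + 1) → Fin (m + 1))
    (v : Fin (n + 1) → Fin (m + 1) → Z) :
    swapArr n m k v = permArr n m (fun t => Equiv.swap 0 (k t)) v :=
  rfl

theorem piCongrRight_swap_onePath (n m : ℕ) (k : Fin (n + 1) → Fin (m + 1)) :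
    Equiv.piCongrRight (fun t => Equiv.swap 0 (k t)) (onePath n m) = k :=
  funext fun t => Equiv.swap_apply_left 0 (k t)

theorem rBar_swap_invariance_general
    (n m : ℕ)
    (γθ γϑ γθϑ qp : Fin (n + 1) → Z → ℝ)
    (ηθ ηϑ qθϑ qϑθ : ℝ)
    (v : Fin (n + 1) → Fin (m + 1) → Z) (k : Fin (n + 1) → Fin (m + 1)) :
    rBar n m ηθ ηϑ qθϑ qϑθ γθ γϑ γθϑ qp k v
      = rBar n m ηθ ηϑ qθϑ qϑθ γθ γϑ γθϑ qp (onePath n m) (swapArr n m k v) := by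
  rw [swapArr_eq_permArr, rBar_permArr, piCongrRight_swap_onePath]

/-- For every particle array `v` and index path `k`,
`r_{k,v}(θ,ϑ) = r_{𝟏,s_{1,k}(v)}(θ,ϑ)`. -/
theorem rBar_swap_invariance
    [MeasurableSpace Z] (n m : ℕ)
    (γθ γϑ γθϑ qp : Fin (n + 1) → Z → ℝ)
    (hγθm : ∀ t, Measurable (γθ t)) (hγϑm : ∀ t, Measurable (γϑ t))
    (hγθϑm : ∀ t, Measurable (γθϑ t)) (hqpm : ∀ t, Measurable (qp t))
    (hγθ : ∀ t z, 0 < γθ t z) (hγϑ : ∀ t z, 0 < γϑ t z)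
    (hγθϑ : ∀ t z, 0 < γθϑ t z) (hqp : ∀ t z, 0 < qp t z)
    (ηθ ηϑ qθϑ qϑθ : ℝ)
    (hηθ : 0 < ηθ) (hηϑ : 0 < ηϑ) (hqθϑ : 0 < qθϑ) (hqϑθ : 0 < qϑθ)
    (v : Fin (n + 1) → Fin (m + 1) → Z) (k : Fin (n + 1) → Fin (m + 1)) :
    rBar n m ηθ ηϑ qθϑ qϑθ γθ γϑ γθϑ qp k v
      = rBar n m ηθ ηϑ qθϑ qϑθ γθ γϑ γθϑ qp (onePath n m) (swapArr n m k v) :=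
  rBar_swap_invariance_general n m γθ γϑ γθϑ qp ηθ ηϑ qθϑ qϑθ v k

end MHAARRB7
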